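/- Let 0 < ε < 1 and s > 0. Then 2 e^{s√(2/π)(1-ε) + s²/2} (1 - Φ(s)) ≤ 2 e^{-s√(2/π)(1+ε) + s²/2} Φ(s); that is, the Chernoff bound B(s) for the left tail is dominated by the Chernoff bound A(s) for the right tail. -/

import Mathlib

/-! With `κ = √(2/π)` the exponentials differ by the factor `e^{2κs}`, so the claim is
`(1 - Φ s) e^{2κs} ≤ Φ s`. Let `G = Φ - (1 - Φ) e^{2κs}`; then `G 0 = 0` and
`G' = e^{2κs} P`, `P' = φ Q`, `Q' = R - 1` for explicit `P, Q, R`, with `P 0 = Q 0 = 0`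
(because `2 φ 0 = κ`) and `R` decreasing from `4κ² - 1 > 1` to `0`. Hence `Q'` and then `Q`
change sign once, from `+` to `-`, on `[0, ∞)`; so `P` rises and then falls, and as
`P 0 = 0 = lim P` it is nonnegative, which makes `G` increasing. -/

open MeasureTheory ProbabilityTheory

noncomputable def stdNormalCDF (s : ℝ) : ℝ := (gaussianReal 0 1 (Set.Iic s)).toReal

open Real Set Filter Topology

section SignChange

def NonnegThenNonpos (f : ℝ → ℝ) (a b : ℝ) : Prop :=
  a ≤ b ∧ (∀ x ∈ Icc a b, 0 ≤ f x) ∧ ∀ x ∈ Ici b, f x ≤ 0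

variable {f f' g : ℝ → ℝ} {a b : ℝ}

lemma NonnegThenNonpos.mul_left (hg : ∀ x, 0 ≤ g x) (h : NonnegThenNonpos f a b) :
    NonnegThenNonpos (fun x ↦ g x * f x) a b :=
  ⟨h.1, fun x hx ↦ mul_nonneg (hg x) (h.2.1 x hx),
    fun x hx ↦ mul_nonpos_of_nonneg_of_nonpos (hg x) (h.2.2 x hx)⟩

lemma NonnegThenNonpos.monotoneOn (hf : ∀ x, HasDerivAt f (f' x) x)
    (h : NonnegThenNonpos f' a b) : MonotoneOn f (Icc a b) :=
  monotoneOn_of_deriv_nonneg (convex_Icc a b)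
    (fun x _ ↦ (hf x).continuousAt.continuousWithinAt)
    (fun x _ ↦ (hf x).differentiableAt.differentiableWithinAt)
    fun x hx ↦ (hf x).deriv ▸ h.2.1 x (interior_subset hx)

lemma NonnegThenNonpos.antitoneOn (hf : ∀ x, HasDerivAt f (f' x) x)
    (h : NonnegThenNonpos f' a b) : AntitoneOn f (Ici b) :=
  antitoneOn_of_deriv_nonpos (convex_Ici b)
    (fun x _ ↦ (hf x).continuousAt.continuousWithinAt)
    (fun x _ ↦ (hf x).differentiableAt.differentiableWithinAt)
    fun x hx ↦ (hf x).deriv ▸ h.2.2 x (interior_subset hx)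

lemma nonneg_of_monotoneOn_Icc (hmono : MonotoneOn f (Icc a b)) (ha : 0 ≤ f a) {x : ℝ}
    (hx : x ∈ Icc a b) : 0 ≤ f x :=
  ha.trans (hmono (left_mem_Icc.2 (hx.1.trans hx.2)) hx hx.1)

lemma exists_nonnegThenNonpos (hf : Continuous f) (hab : a ≤ b)
    (hmono : MonotoneOn f (Icc a b)) (hanti : AntitoneOn f (Ici b)) (ha : 0 ≤ f a)
    (hneg : ∀ᶠ x in atTop, f x < 0) : ∃ c, NonnegThenNonpos f a c := by
  obtain ⟨t, ht, hbt⟩ := (hneg.and (eventually_ge_atTop b)).exists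
  have hb : 0 ≤ f b := nonneg_of_monotoneOn_Icc hmono ha (right_mem_Icc.2 hab)
  obtain ⟨c, hc, hfc⟩ := intermediate_value_Icc' hbt hf.continuousOn ⟨ht.le, hb⟩
  refine ⟨c, hab.trans hc.1, fun x hx ↦ ?_,
    fun x hx ↦ hfc ▸ hanti hc.1 (hc.1.trans hx) hx⟩
  rcases le_total x b with hxb | hbx
  · exact nonneg_of_monotoneOn_Icc hmono ha ⟨hx.1, hxb⟩
  · exact hfc ▸ hanti hbx hc.1 hx.2

lemma nonneg_of_monotoneOn_of_antitoneOn (hmono : MonotoneOn f (Icc a b))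
    (hanti : AntitoneOn f (Ici b)) (ha : 0 ≤ f a) (hlim : Tendsto f atTop (𝓝 0)) {x : ℝ}
    (hx : a ≤ x) : 0 ≤ f x := by
  rcases le_total x b with hxb | hbx
  · exact nonneg_of_monotoneOn_Icc hmono ha ⟨hx, hxb⟩
  · refine le_of_tendsto hlim ((eventually_ge_atTop x).mono fun y hy ↦ ?_)
    exact hanti hbx (hbx.trans hy) hy

end SignChange

section StdNormal

noncomputable def stdNormalPDF (x : ℝ) : ℝ := (√(2 * π))⁻¹ * exp (-x ^ 2 / 2)

lemma gaussianPDFReal_zero_one : gaussianPDFReal 0 1 = stdNormalPDF := by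
  ext x; simp [gaussianPDFReal, stdNormalPDF]

lemma stdNormalPDF_pos (x : ℝ) : 0 < stdNormalPDF x := by
  unfold stdNormalPDF; positivity

lemma continuous_stdNormalPDF : Continuous stdNormalPDF := by
  unfold stdNormalPDF; fun_prop

lemma integrable_stdNormalPDF : Integrable stdNormalPDF :=
  gaussianPDFReal_zero_one ▸ integrable_gaussianPDFReal 0 1

lemma hasDerivAt_stdNormalPDF (x : ℝ) : HasDerivAt stdNormalPDF (-x * stdNormalPDF x) x := by
  have h : HasDerivAt (fun y : ℝ ↦ -y ^ 2 / 2) (-x) x :=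
    ((hasDerivAt_pow 2 x).neg.div_const 2).congr_deriv (by ring)
  exact (h.exp.const_mul (√(2 * π))⁻¹).congr_deriv (by simp only [stdNormalPDF]; ring)

lemma tendsto_stdNormalPDF_atTop : Tendsto stdNormalPDF atTop (𝓝 0) := by
  have h : Tendsto (fun x : ℝ ↦ x ^ 2 / 2) atTop atTop :=
    (tendsto_pow_atTop two_ne_zero).atTop_div_const two_pos
  have h' := (tendsto_exp_neg_atTop_nhds_zero.comp h).const_mul (√(2 * π))⁻¹
  rw [mul_zero] at h'
  exact h'.congr fun x ↦ by simp [stdNormalPDF, neg_div]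

lemma two_mul_stdNormalPDF_zero : 2 * stdNormalPDF 0 = √(2 / π) := by
  have h : √(2 / π) * √(2 * π) = 2 := by
    rw [← sqrt_mul (by positivity), show 2 / π * (2 * π) = 2 ^ 2 by field_simp,
      sqrt_sq zero_le_two]
  rw [stdNormalPDF, zero_pow two_ne_zero, neg_zero, zero_div, exp_zero, mul_one,
    ← div_eq_mul_inv, div_eq_iff (by positivity), h]

lemma stdNormalCDF_eq_cdf : stdNormalCDF = cdf (gaussianReal 0 1) := by
  ext s; rw [cdf_eq_real, measureReal_def, stdNormalCDF]

lemma tendsto_stdNormalCDF_atTop : Tendsto stdNormalCDF atTop (𝓝 1) :=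
  stdNormalCDF_eq_cdf ▸ tendsto_cdf_atTop _

lemma stdNormalCDF_eq_integral (s : ℝ) : stdNormalCDF s = ∫ x in Iic s, stdNormalPDF x := by
  rw [stdNormalCDF, gaussianReal_apply_eq_integral 0 one_ne_zero, ENNReal.toReal_ofReal
    (setIntegral_nonneg measurableSet_Iic fun x _ ↦ gaussianPDFReal_nonneg 0 1 x),
    gaussianPDFReal_zero_one]

lemma hasDerivAt_stdNormalCDF (s : ℝ) : HasDerivAt stdNormalCDF (stdNormalPDF s) s := by
  have h : stdNormalCDF = fun t ↦ stdNormalCDF 0 + ∫ x in (0 : ℝ)..t, stdNormalPDF x := by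
    ext t
    rw [stdNormalCDF_eq_integral, stdNormalCDF_eq_integral,
      ← intervalIntegral.integral_Iic_sub_Iic integrable_stdNormalPDF.integrableOn
        integrable_stdNormalPDF.integrableOn]
    ring
  rw [h]
  exact (intervalIntegral.integral_hasDerivAt_right integrable_stdNormalPDF.intervalIntegrable
    continuous_stdNormalPDF.stronglyMeasurable.stronglyMeasurableAtFilter
    continuous_stdNormalPDF.continuousAt).const_add _

lemma stdNormalCDF_zero : stdNormalCDF 0 = 1 / 2 := by
  have : NullSingletonClass (gaussianReal 0 1) := nullSingletonClass_gaussianReal one_ne_zero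
  have hsymm : (gaussianReal 0 1).real (Ioi 0) = (gaussianReal 0 1).real (Iic 0) := by
    have hneg : (gaussianReal 0 1).map (fun x ↦ -x) = gaussianReal 0 1 := by
      simpa using gaussianReal_map_neg (μ := 0) (v := 1)
    rw [measureReal_congr Ioi_ae_eq_Ici]
    conv_rhs => rw [← hneg, map_measureReal_apply measurable_neg measurableSet_Iic, neg_preimage,
      neg_Iic, neg_zero]
  have hsum := probReal_compl_eq_one_sub (μ := gaussianReal 0 1) (s := Iic 0) measurableSet_Iic
  rw [compl_Iic, hsymm] at hsum
  rw [stdNormalCDF, ← measureReal_def]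
  linarith

end StdNormal

section Chernoff

local notation "κ" => √(2 / π)

lemma sqrt_two_div_pi_pos : 0 < κ := sqrt_pos.2 (by positivity)

lemma two_lt_four_mul_sqrt_two_div_pi_sq : 2 < 4 * κ ^ 2 := by
  rw [sq_sqrt (by positivity), mul_div_assoc', lt_div_iff₀ pi_pos]
  linarith [pi_lt_four]

namespace StdNormalTail

noncomputable def G (s : ℝ) : ℝ := stdNormalCDF s - (1 - stdNormalCDF s) * exp (2 * κ * s)

noncomputable def P (s : ℝ) : ℝ :=
  stdNormalPDF s * (1 + exp (-(2 * κ * s))) - 2 * κ * (1 - stdNormalCDF s)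

noncomputable def Q (s : ℝ) : ℝ :=
  2 * κ * (1 - exp (-(2 * κ * s))) - s * (1 + exp (-(2 * κ * s)))

noncomputable def R (s : ℝ) : ℝ := (4 * κ ^ 2 - 1 + 2 * κ * s) * exp (-(2 * κ * s))

lemma hasDerivAt_exp_neg_two_mul (s : ℝ) :
    HasDerivAt (fun t ↦ exp (-(2 * κ * t))) (-(2 * κ) * exp (-(2 * κ * s))) s := by
  simpa [mul_comm] using ((hasDerivAt_id s).const_mul (2 * κ)).neg.exp

lemma hasDerivAt_R (s : ℝ) :
    HasDerivAt R (-(2 * κ * (4 * κ ^ 2 - 2 + 2 * κ * s) * exp (-(2 * κ * s)))) s := by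
  have h := (((hasDerivAt_id s).const_mul (2 * κ)).const_add (4 * κ ^ 2 - 1)).mul
    (hasDerivAt_exp_neg_two_mul s)
  exact h.congr_deriv (by simp only [id]; ring)

lemma antitoneOn_R : AntitoneOn R (Ici 0) :=
  antitoneOn_of_deriv_nonpos (convex_Ici 0)
    (fun x _ ↦ (hasDerivAt_R x).continuousAt.continuousWithinAt)
    (fun x _ ↦ (hasDerivAt_R x).differentiableAt.differentiableWithinAt) fun x hx ↦ by
      have hκ := sqrt_two_div_pi_pos
      have hx : 0 ≤ 4 * κ ^ 2 - 2 + 2 * κ * x := by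
        nlinarith [two_lt_four_mul_sqrt_two_div_pi_sq, mem_Ici.1 (interior_subset hx)]
      rw [(hasDerivAt_R x).deriv, neg_nonpos]
      positivity

lemma tendsto_R_atTop : Tendsto R atTop (𝓝 0) := by
  have hlin : Tendsto (fun s ↦ 2 * κ * s) atTop atTop :=
    tendsto_id.const_mul_atTop (by positivity)
  have h := ((tendsto_exp_neg_atTop_nhds_zero.const_mul (4 * κ ^ 2 - 1)).add
    (by simpa using tendsto_pow_mul_exp_neg_atTop_nhds_zero 1)).comp hlin
  rw [mul_zero, add_zero] at h
  exact h.congr fun s ↦ by simp only [R, Function.comp]; ring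

lemma exists_nonnegThenNonpos_R_sub_one : ∃ b, NonnegThenNonpos (fun s ↦ R s - 1) 0 b := by
  refine exists_nonnegThenNonpos (by unfold R; fun_prop) le_rfl (by simp)
    (fun x hx y hy hxy ↦ sub_le_sub_right (antitoneOn_R hx hy hxy) 1) ?_ ?_
  · simp only [R, mul_zero, add_zero, neg_zero, exp_zero, mul_one]
    linarith [two_lt_four_mul_sqrt_two_div_pi_sq]
  · filter_upwards [tendsto_R_atTop.eventually_lt_const one_pos] with s hs
    linarith

lemma hasDerivAt_Q (s : ℝ) : HasDerivAt Q (R s - 1) s := by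
  have h := (((hasDerivAt_const s 1).sub (hasDerivAt_exp_neg_two_mul s)).const_mul (2 * κ)).sub
    ((hasDerivAt_id s).mul ((hasDerivAt_const s 1).add (hasDerivAt_exp_neg_two_mul s)))
  exact h.congr_deriv (by simp only [R, id, Pi.add_apply]; ring)

lemma exists_nonnegThenNonpos_Q : ∃ b, NonnegThenNonpos Q 0 b := by
  obtain ⟨b, hb⟩ := exists_nonnegThenNonpos_R_sub_one
  refine exists_nonnegThenNonpos (by unfold Q; fun_prop) hb.1 (hb.monotoneOn hasDerivAt_Q)
    (hb.antitoneOn hasDerivAt_Q) (by simp [Q]) ?_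
  filter_upwards [eventually_gt_atTop (2 * κ)] with s hs
  have he := (exp_pos (-(2 * κ * s))).le
  have hκ := sqrt_two_div_pi_pos.le
  simp only [Q]
  have hs0 : 0 ≤ s := by linarith
  nlinarith [mul_nonneg hκ he, mul_nonneg hs0 he]

lemma hasDerivAt_P (s : ℝ) : HasDerivAt P (stdNormalPDF s * Q s) s := by
  have h := ((hasDerivAt_stdNormalPDF s).mul
    ((hasDerivAt_const s 1).add (hasDerivAt_exp_neg_two_mul s))).sub
      (((hasDerivAt_const s 1).sub (hasDerivAt_stdNormalCDF s)).const_mul (2 * κ))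
  exact h.congr_deriv (by simp only [Q, Pi.add_apply]; ring)

lemma tendsto_P_atTop : Tendsto P atTop (𝓝 0) := by
  have hexp : Tendsto (fun s ↦ exp (-(2 * κ * s))) atTop (𝓝 0) :=
    tendsto_exp_neg_atTop_nhds_zero.comp (tendsto_id.const_mul_atTop (by positivity))
  have h : Tendsto P atTop (𝓝 (0 * (1 + 0) - 2 * κ * (1 - 1))) :=
    (tendsto_stdNormalPDF_atTop.mul (hexp.const_add 1)).sub
    ((tendsto_stdNormalCDF_atTop.const_sub 1).const_mul (2 * κ))
  simpa only [zero_mul, sub_self, mul_zero, sub_zero] using h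

lemma P_nonneg {s : ℝ} (hs : 0 ≤ s) : 0 ≤ P s := by
  obtain ⟨b, hb⟩ := exists_nonnegThenNonpos_Q
  have hb' := hb.mul_left fun x ↦ (stdNormalPDF_pos x).le
  refine nonneg_of_monotoneOn_of_antitoneOn (hb'.monotoneOn hasDerivAt_P)
    (hb'.antitoneOn hasDerivAt_P) ?_ tendsto_P_atTop hs
  simp only [P, mul_zero, neg_zero, exp_zero, stdNormalCDF_zero]
  linarith [two_mul_stdNormalPDF_zero]

lemma hasDerivAt_G (s : ℝ) : HasDerivAt G (exp (2 * κ * s) * P s) s := by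
  have h := (hasDerivAt_stdNormalCDF s).sub (((hasDerivAt_const s 1).sub
    (hasDerivAt_stdNormalCDF s)).mul ((hasDerivAt_id s).const_mul (2 * κ)).exp)
  refine h.congr_deriv ?_
  simp only [P, id, Pi.sub_apply, mul_add, exp_neg]
  field_simp
  ring

end StdNormalTail

open StdNormalTail in
lemma one_sub_stdNormalCDF_mul_exp_le {s : ℝ} (hs : 0 ≤ s) :
    (1 - stdNormalCDF s) * exp (2 * κ * s) ≤ stdNormalCDF s := by
  have hmono : MonotoneOn G (Ici 0) :=
    monotoneOn_of_deriv_nonneg (convex_Ici 0)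
      (fun x _ ↦ (hasDerivAt_G x).continuousAt.continuousWithinAt)
      (fun x _ ↦ (hasDerivAt_G x).differentiableAt.differentiableWithinAt) fun x hx ↦
        (hasDerivAt_G x).deriv ▸ mul_nonneg (exp_pos _).le (P_nonneg (interior_subset hx))
  have h := hmono self_mem_Ici hs hs
  simp only [G, stdNormalCDF_zero, mul_zero, exp_zero] at h
  linarith

end Chernoff

theorem stmt_15_general (ε : ℝ) (s : ℝ) (hs : 0 < s) :
    2 * Real.exp (s * Real.sqrt (2 / Real.pi) * (1 - ε) + s ^ 2 / 2) * (1 - stdNormalCDF s)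
      ≤ 2 * Real.exp (-(s * Real.sqrt (2 / Real.pi) * (1 + ε)) + s ^ 2 / 2) * stdNormalCDF s := by
  have hexp : exp (s * √(2 / π) * (1 - ε) + s ^ 2 / 2)
      = exp (-(s * √(2 / π) * (1 + ε)) + s ^ 2 / 2) * exp (2 * √(2 / π) * s) := by
    rw [← exp_add]; ring_nf
  calc 2 * exp (s * √(2 / π) * (1 - ε) + s ^ 2 / 2) * (1 - stdNormalCDF s)
      = 2 * exp (-(s * √(2 / π) * (1 + ε)) + s ^ 2 / 2)
        * ((1 - stdNormalCDF s) * exp (2 * √(2 / π) * s)) := by rw [hexp]; ring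
    _ ≤ _ := by gcongr; exact one_sub_stdNormalCDF_mul_exp_le hs.le

/-- For `0 < ε < 1` and `s > 0`, the Chernoff bound `B(s)` for the left tail is dominated
by the Chernoff bound `A(s)` for the right tail:
`2 e^{s√(2/π)(1-ε)+s²/2}(1-Φ(s)) ≤ 2 e^{-s√(2/π)(1+ε)+s²/2} Φ(s)`. -/
theorem stmt_15 (ε : ℝ) (hε0 : 0 < ε) (hε1 : ε < 1) (s : ℝ) (hs : 0 < s) :
    2 * Real.exp (s * Real.sqrt (2 / Real.pi) * (1 - ε) + s ^ 2 / 2) * (1 - stdNormalCDF s)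
      ≤ 2 * Real.exp (-(s * Real.sqrt (2 / Real.pi) * (1 + ε)) + s ^ 2 / 2) * stdNormalCDF s :=
  stmt_15_general ε s hs
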